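/- arXiv:1410.2076 — 2 statements merged into one kernel-verified Lean document; each statement's English description precedes it below -/
import Mathlib

section
/- Let d ≥ 1 and let X_q, X_p : ℝ^d × ℝ^d → ℝ^d be continuously differentiable maps satisfying, at every point (x,y) ∈ ℝ^d × ℝ^d, the Hamiltonian Helmholtz conditions: ∂X_q/∂x(x,y) + (∂X_p/∂y(x,y))ᵀ = 0, and the d × d matrices ∂X_q/∂y(x,y) and ∂X_p/∂x(x,y) are symmetric. Define H : ℝ^d × ℝ^d → ℝ by H(x,y) = ∫₀¹ ( ⟨y, X_q(λx, λy)⟩ − ⟨x, X_p(λx, λy)⟩ ) dλ. Then H is differentiable and for every (x,y) ∈ ℝ^d × ℝ^d one has ∂H/∂y(x,y) = X_q(x,y) and ∂H/∂x(x,y) = −X_p(x,y); in particular, X = (X_q, X_p) is a Hamiltonian vector field with Hamiltonian H. -/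
/-!
The Helmholtz conditions say exactly that the 1-form `ω z w = ⟪Xq z, w.2⟫ - ⟪Xp z, w.1⟫`,
the contraction of `X` with the standard symplectic form, is closed: its derivative is
symmetric. Since `H z = ∫₀¹ ω (t • z) z dt` is the integral of `ω` along the segment from `0`
to `z`, the Poincaré lemma gives `dH = ω`, whose two blocks are the claimed partial gradients.
-/

open scoped RealInnerProductSpace

/-- The Jacobian block of the total derivative of `F` at `z` corresponding to the
first factor (`∂F/∂x(z)`), as a continuous linear map. -/
noncomputable def pderivFst {d m : ℕ}
    (F : EuclideanSpace ℝ (Fin d) × EuclideanSpace ℝ (Fin d) → EuclideanSpace ℝ (Fin m))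
    (z : EuclideanSpace ℝ (Fin d) × EuclideanSpace ℝ (Fin d)) :
    EuclideanSpace ℝ (Fin d) →L[ℝ] EuclideanSpace ℝ (Fin m) :=
  (fderiv ℝ F z).comp (ContinuousLinearMap.inl ℝ _ _)

/-- The Jacobian block of the total derivative of `F` at `z` corresponding to the
second factor (`∂F/∂y(z)`), as a continuous linear map. -/
noncomputable def pderivSnd {d m : ℕ}
    (F : EuclideanSpace ℝ (Fin d) × EuclideanSpace ℝ (Fin d) → EuclideanSpace ℝ (Fin m))
    (z : EuclideanSpace ℝ (Fin d) × EuclideanSpace ℝ (Fin d)) :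
    EuclideanSpace ℝ (Fin d) →L[ℝ] EuclideanSpace ℝ (Fin m) :=
  (fderiv ℝ F z).comp (ContinuousLinearMap.inr ℝ _ _)

/-- The Hamiltonian Helmholtz conditions for the pair `X = (Xq, Xp)`:
`∂Xq/∂x + (∂Xp/∂y)ᵀ = 0`, and `∂Xq/∂y`, `∂Xp/∂x` are symmetric
(transposition being the adjoint with respect to the Euclidean inner product). -/
def HelmholtzConditions {d : ℕ}
    (Xq Xp : EuclideanSpace ℝ (Fin d) × EuclideanSpace ℝ (Fin d) → EuclideanSpace ℝ (Fin d)) :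
    Prop :=
  ∀ z : EuclideanSpace ℝ (Fin d) × EuclideanSpace ℝ (Fin d),
    pderivFst Xq z + ContinuousLinearMap.adjoint (pderivSnd Xp z) = 0 ∧
    ContinuousLinearMap.adjoint (pderivSnd Xq z) = pderivSnd Xq z ∧
    ContinuousLinearMap.adjoint (pderivFst Xp z) = pderivFst Xp z

/-- `X = (Xq, Xp)` is a Hamiltonian vector field: there is a twice continuously
differentiable `H` with `Xq = ∂H/∂y` and `Xp = −∂H/∂x` (partial gradients). -/
def IsHamiltonianPair {d : ℕ}
    (Xq Xp : EuclideanSpace ℝ (Fin d) × EuclideanSpace ℝ (Fin d) → EuclideanSpace ℝ (Fin d)) :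
    Prop :=
  ∃ H : EuclideanSpace ℝ (Fin d) × EuclideanSpace ℝ (Fin d) → ℝ,
    ContDiff ℝ 2 H ∧
    ∀ z : EuclideanSpace ℝ (Fin d) × EuclideanSpace ℝ (Fin d),
      HasGradientAt (fun y => H (z.1, y)) (Xq z) z.2 ∧
      HasGradientAt (fun x => H (x, z.2)) (-(Xp z)) z.1

open ContinuousLinearMap

theorem hasFDerivAt_radialIntegral_of_fderiv_symmetric {E F : Type*}
    [NormedAddCommGroup E] [NormedSpace ℝ E]
    [NormedAddCommGroup F] [NormedSpace ℝ F] [CompleteSpace F]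
    {ω : E → E →L[ℝ] F} (hω : Differentiable ℝ ω)
    (hdω : ∀ a x y, fderiv ℝ ω a x y = fderiv ℝ ω a y x) (z : E) :
    HasFDerivAt (fun z => ∫ t in (0 : ℝ)..1, ω (t • z) z) (ω z) z := by
  have h := Convex.hasFDerivWithinAt_curveIntegral_segment_of_hasFDerivWithinAt_symmetric
    convex_univ (fun x _ => (hω x).hasFDerivAt.hasFDerivWithinAt)
    (fun a _ x _ y _ => hdω a x y) (Set.mem_univ 0) (Set.mem_univ z)
  rw [hasFDerivWithinAt_univ] at h
  convert h using 2 with b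
  simp [curveIntegral_segment, AffineMap.lineMap_apply_module']

section HamiltonianForm

variable {E : Type*} [NormedAddCommGroup E] [InnerProductSpace ℝ E]

noncomputable def hamiltonianForm (Xq Xp : E × E → E) (z : E × E) : E × E →L[ℝ] ℝ :=
  (innerSL ℝ (Xq z)).comp (snd ℝ E E) - (innerSL ℝ (Xp z)).comp (fst ℝ E E)

@[simp]
theorem hamiltonianForm_apply (Xq Xp : E × E → E) (z w : E × E) :
    hamiltonianForm Xq Xp z w = ⟪Xq z, w.2⟫ - ⟪Xp z, w.1⟫ := rfl

variable {Xq Xp : E × E → E} {z : E × E}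

theorem differentiable_hamiltonianForm (hq : Differentiable ℝ Xq) (hp : Differentiable ℝ Xp) :
    Differentiable ℝ (hamiltonianForm Xq Xp) :=
  (((innerSL ℝ).differentiable.comp hq).clm_comp (differentiable_const _)).sub
    (((innerSL ℝ).differentiable.comp hp).clm_comp (differentiable_const _))

theorem fderiv_hamiltonianForm_apply (hq : DifferentiableAt ℝ Xq z)
    (hp : DifferentiableAt ℝ Xp z) (v w : E × E) :
    fderiv ℝ (hamiltonianForm Xq Xp) z v w = ⟪fderiv ℝ Xq z v, w.2⟫ - ⟪fderiv ℝ Xp z v, w.1⟫ := by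
  have h : HasFDerivAt (hamiltonianForm Xq Xp) _ z :=
    (((innerSL ℝ).hasFDerivAt.comp z hq.hasFDerivAt).clm_comp (hasFDerivAt_const _ z)).sub
      (((innerSL ℝ).hasFDerivAt.comp z hp.hasFDerivAt).clm_comp (hasFDerivAt_const _ z))
  rw [h.fderiv]
  simp only [Function.comp_apply, comp_zero, zero_add, sub_apply, comp_apply, flip_apply,
    compL_apply, coe_snd', coe_fst']
  rfl

end HamiltonianForm

theorem HasFDerivAt.hasGradientAt_prodMk_left {F E : Type*} [NormedAddCommGroup F]
    [NormedSpace ℝ F] [NormedAddCommGroup E] [InnerProductSpace ℝ E] [CompleteSpace E]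
    {f : E × F → ℝ} {L : E × F →L[ℝ] ℝ} {z : E × F} (hf : HasFDerivAt f L z) {g : E}
    (hL : ∀ x, L (x, 0) = ⟪g, x⟫) : HasGradientAt (fun x => f (x, z.2)) g z.1 := by
  have hslice : HasFDerivAt (fun x => f (x, z.2)) (L.comp (inl ℝ E F)) z.1 :=
    hf.comp z.1 (hasFDerivAt_prodMk_left z.1 z.2)
  exact hasGradientAt_iff_hasFDerivAt.2 (hslice.congr_fderiv (ext fun x => by simp [hL]))

theorem HasFDerivAt.hasGradientAt_prodMk_right {F E : Type*} [NormedAddCommGroup F]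
    [NormedSpace ℝ F] [NormedAddCommGroup E] [InnerProductSpace ℝ E] [CompleteSpace E]
    {f : F × E → ℝ} {L : F × E →L[ℝ] ℝ} {z : F × E} (hf : HasFDerivAt f L z) {g : E}
    (hL : ∀ y, L (0, y) = ⟪g, y⟫) : HasGradientAt (fun y => f (z.1, y)) g z.2 := by
  have hslice : HasFDerivAt (fun y => f (z.1, y)) (L.comp (inr ℝ F E)) z.2 :=
    hf.comp z.2 (hasFDerivAt_prodMk_right z.1 z.2)
  exact hasGradientAt_iff_hasFDerivAt.2 (hslice.congr_fderiv (ext fun y => by simp [hL]))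

section Euclidean

variable {d : ℕ}
local notation "E" => EuclideanSpace ℝ (Fin d)

theorem fderiv_apply_eq_pderivFst_add_pderivSnd {m : ℕ} (F : E × E → EuclideanSpace ℝ (Fin m))
    (z v : E × E) : fderiv ℝ F z v = pderivFst F z v.1 + pderivSnd F z v.2 := by
  rw [pderivFst, pderivSnd, coe_comp, coe_comp, Function.comp_apply, Function.comp_apply,
    ← map_add, inl_apply, inr_apply, Prod.mk_add_mk, add_zero, zero_add]

theorem HelmholtzConditions.fderiv_hamiltonianForm_symmetric {Xq Xp : E × E → E}
    (helm : HelmholtzConditions Xq Xp) (hq : Differentiable ℝ Xq) (hp : Differentiable ℝ Xp)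
    (z v w : E × E) :
    fderiv ℝ (hamiltonianForm Xq Xp) z v w = fderiv ℝ (hamiltonianForm Xq Xp) z w v := by
  obtain ⟨hcross, hq_symm, hp_symm⟩ := helm z
  have hcross' : ∀ a b : E, ⟪pderivFst Xq z a, b⟫ = -⟪a, pderivSnd Xp z b⟫ := by
    intro a b
    rw [eq_neg_of_add_eq_zero_left hcross, neg_apply, inner_neg_left, adjoint_inner_left,
      real_inner_comm]
  have hq_symm' : ∀ a b : E, ⟪pderivSnd Xq z a, b⟫ = ⟪pderivSnd Xq z b, a⟫ := fun a b => by
    rw [← adjoint_inner_right, hq_symm, real_inner_comm]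
  have hp_symm' : ∀ a b : E, ⟪pderivFst Xp z a, b⟫ = ⟪pderivFst Xp z b, a⟫ := fun a b => by
    rw [← adjoint_inner_right, hp_symm, real_inner_comm]
  simp only [fderiv_hamiltonianForm_apply (hq z) (hp z), fderiv_apply_eq_pderivFst_add_pderivSnd,
    inner_add_left, hcross']
  rw [hq_symm' v.2, hp_symm' v.1, real_inner_comm (pderivSnd Xp z w.2),
    real_inner_comm (pderivSnd Xp z v.2)]
  ring

end Euclidean

theorem hamiltonian_of_helmholtz_general {d : ℕ}
    (Xq Xp : EuclideanSpace ℝ (Fin d) × EuclideanSpace ℝ (Fin d) → EuclideanSpace ℝ (Fin d))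
    (hXq : ContDiff ℝ 1 Xq) (hXp : ContDiff ℝ 1 Xp)
    (helm : HelmholtzConditions Xq Xp)
    (H : EuclideanSpace ℝ (Fin d) × EuclideanSpace ℝ (Fin d) → ℝ)
    (hHdef : ∀ z : EuclideanSpace ℝ (Fin d) × EuclideanSpace ℝ (Fin d),
      H z = ∫ l in (0:ℝ)..(1:ℝ),
        (⟪z.2, Xq (l • z.1, l • z.2)⟫ - ⟪z.1, Xp (l • z.1, l • z.2)⟫)) :
    Differentiable ℝ H ∧
    ∀ z : EuclideanSpace ℝ (Fin d) × EuclideanSpace ℝ (Fin d),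
      HasGradientAt (fun y => H (z.1, y)) (Xq z) z.2 ∧
      HasGradientAt (fun x => H (x, z.2)) (-(Xp z)) z.1 := by
  have hq := hXq.differentiable one_ne_zero
  have hp := hXp.differentiable one_ne_zero
  have hH_eq : H = fun z => ∫ t in (0 : ℝ)..1, hamiltonianForm Xq Xp (t • z) z := by
    funext z
    simp only [hHdef, hamiltonianForm_apply, real_inner_comm z.2, real_inner_comm z.1]
    rfl -- `t • z` unfolds to `(t • z.1, t • z.2)`
  have hH : ∀ z, HasFDerivAt H (hamiltonianForm Xq Xp z) z := by
    rw [hH_eq]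
    exact hasFDerivAt_radialIntegral_of_fderiv_symmetric (differentiable_hamiltonianForm hq hp)
      (helm.fderiv_hamiltonianForm_symmetric hq hp)
  refine ⟨fun z => (hH z).differentiableAt, fun z => ⟨?_, ?_⟩⟩
  · exact (hH z).hasGradientAt_prodMk_right fun y => by simp
  · exact (hH z).hasGradientAt_prodMk_left fun x => by simp

theorem hamiltonian_of_helmholtz {d : ℕ} (hd : 1 ≤ d)
    (Xq Xp : EuclideanSpace ℝ (Fin d) × EuclideanSpace ℝ (Fin d) → EuclideanSpace ℝ (Fin d))
    (hXq : ContDiff ℝ 1 Xq) (hXp : ContDiff ℝ 1 Xp)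
    (helm : HelmholtzConditions Xq Xp)
    (H : EuclideanSpace ℝ (Fin d) × EuclideanSpace ℝ (Fin d) → ℝ)
    (hHdef : ∀ z : EuclideanSpace ℝ (Fin d) × EuclideanSpace ℝ (Fin d),
      H z = ∫ l in (0:ℝ)..(1:ℝ),
        (⟪z.2, Xq (l • z.1, l • z.2)⟫ - ⟪z.1, Xp (l • z.1, l • z.2)⟫)) :
    Differentiable ℝ H ∧
    ∀ z : EuclideanSpace ℝ (Fin d) × EuclideanSpace ℝ (Fin d),
      HasGradientAt (fun y => H (z.1, y)) (Xq z) z.2 ∧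
      HasGradientAt (fun x => H (x, z.2)) (-(Xp z)) z.1 :=
  hamiltonian_of_helmholtz_general Xq Xp hXq hXp helm H hHdef
end

section
/- Let t ∈ 𝕋_κ. The following are equivalent: (i) σ (viewed as a real-valued function on 𝕋) is continuous at t within 𝕋; (ii) σ(ρ(t)) = t; (iii) t is not simultaneously right-scattered and left-dense. Dually, for t ∈ 𝕋^κ the following are equivalent: (i) ρ is continuous at t within 𝕋; (ii) ρ(σ(t)) = t; (iii) t is not simultaneously left-scattered and right-dense. -/
open Set Filter Topology

/-- Forward jump operator of the time scale `T` (with `b = sSup T`). -/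
noncomputable def tsSigma (T : Set ℝ) (t : ℝ) : ℝ :=
  if t < sSup T then sInf {s | s ∈ T ∧ t < s} else sSup T

/-- Backward jump operator of the time scale `T` (with `a = sInf T`). -/
noncomputable def tsRho (T : Set ℝ) (t : ℝ) : ℝ :=
  if sInf T < t then sSup {s | s ∈ T ∧ s < t} else sInf T

/-- `𝕋^κ = 𝕋 \ (ρ(b), b]`. -/
def tsK (T : Set ℝ) : Set ℝ := T \ Ioc (tsRho T (sSup T)) (sSup T)

/-- `𝕋_κ = 𝕋 \ [a, σ(a))`. -/
def tsKd (T : Set ℝ) : Set ℝ := T \ Ico (sInf T) (tsSigma T (sInf T))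

/-- `𝕋^κ_κ = 𝕋^κ ∩ 𝕋_κ`. -/
def tsKK (T : Set ℝ) : Set ℝ := tsK T ∩ tsKd T

/-- `u` is Δ-differentiable at `t` with Δ-derivative `L`. -/
def HasDeltaDerivAt {E : Type*} [NormedAddCommGroup E] [NormedSpace ℝ E]
    (T : Set ℝ) (u : ℝ → E) (t : ℝ) (L : E) : Prop :=
  Tendsto (fun s => (tsSigma T t - s)⁻¹ • (u (tsSigma T t) - u s))
    (𝓝[T \ {tsSigma T t}] t) (𝓝 L)

/-- `u` is ∇-differentiable at `t` with ∇-derivative `L`. -/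
def HasNablaDerivAt {E : Type*} [NormedAddCommGroup E] [NormedSpace ℝ E]
    (T : Set ℝ) (u : ℝ → E) (t : ℝ) (L : E) : Prop :=
  Tendsto (fun s => (s - tsRho T t)⁻¹ • (u s - u (tsRho T t)))
    (𝓝[T \ {tsRho T t}] t) (𝓝 L)

/-- `u` is rd-continuous on the time scale `T`. -/
def RdContinuous {E : Type*} [NormedAddCommGroup E] [NormedSpace ℝ E]
    (T : Set ℝ) (u : ℝ → E) : Prop :=
  (∀ t ∈ T, tsSigma T t = t → ContinuousWithinAt u T t) ∧
  (∀ t ∈ T, tsRho T t = t → ∃ L : E, Tendsto u (𝓝[T ∩ Iio t] t) (𝓝 L))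

/-- `u` is ld-continuous on the time scale `T`. -/
def LdContinuous {E : Type*} [NormedAddCommGroup E] [NormedSpace ℝ E]
    (T : Set ℝ) (u : ℝ → E) : Prop :=
  (∀ t ∈ T, tsRho T t = t → ContinuousWithinAt u T t) ∧
  (∀ t ∈ T, tsSigma T t = t → ∃ L : E, Tendsto u (𝓝[T ∩ Ioi t] t) (𝓝 L))

section myhelpers
variable {T : Set ℝ} {s t : ℝ}

lemma tsSigma_mem (hc : IsClosed T) (hb : Bornology.IsBounded T) (hne : T.Nonempty)
    (t : ℝ) : tsSigma T t ∈ T := by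
  unfold tsSigma
  split_ifs with h
  · have hS : {s | s ∈ T ∧ t < s}.Nonempty := by
      obtain ⟨p, hp, htp⟩ := exists_lt_of_lt_csSup hne h
      exact ⟨p, hp, htp⟩
    have hbdd : BddBelow {s | s ∈ T ∧ t < s} :=
      BddBelow.mono (fun x hx => hx.1) hb.bddBelow
    have hm := csInf_mem_closure hS hbdd
    have hsub : closure {s | s ∈ T ∧ t < s} ⊆ T := by
      have := closure_mono (fun x (hx : x ∈ {s | s ∈ T ∧ t < s}) => hx.1)
      rwa [hc.closure_eq] at this
    exact hsub hm
  · exact hc.csSup_mem hne hb.bddAbove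

lemma tsRho_mem (hc : IsClosed T) (hb : Bornology.IsBounded T) (hne : T.Nonempty)
    (t : ℝ) : tsRho T t ∈ T := by
  unfold tsRho
  split_ifs with h
  · have hS : {s | s ∈ T ∧ s < t}.Nonempty := by
      obtain ⟨p, hp, htp⟩ := exists_lt_of_csInf_lt hne h
      exact ⟨p, hp, htp⟩
    have hbdd : BddAbove {s | s ∈ T ∧ s < t} :=
      BddAbove.mono (fun x hx => hx.1) hb.bddAbove
    have hm := csSup_mem_closure hS hbdd
    have hsub : closure {s | s ∈ T ∧ s < t} ⊆ T := by
      have := closure_mono (fun x (hx : x ∈ {s | s ∈ T ∧ s < t}) => hx.1)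
      rwa [hc.closure_eq] at this
    exact hsub hm
  · exact hc.csInf_mem hne hb.bddBelow

lemma le_tsSigma (hb : Bornology.IsBounded T) (hne : T.Nonempty) (ht : t ∈ T) :
    t ≤ tsSigma T t := by
  unfold tsSigma
  split_ifs with h
  · refine le_csInf ?_ (fun x hx => hx.2.le)
    obtain ⟨p, hp, htp⟩ := exists_lt_of_lt_csSup hne h
    exact ⟨p, hp, htp⟩
  · exact le_csSup hb.bddAbove ht

lemma tsSigma_le (hb : Bornology.IsBounded T) (hs : s ∈ T) (h : t < s) :
    tsSigma T t ≤ s := by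
  have hts : t < sSup T := lt_of_lt_of_le h (le_csSup hb.bddAbove hs)
  rw [tsSigma, if_pos hts]
  exact csInf_le (BddBelow.mono (fun x hx => hx.1) hb.bddBelow) ⟨hs, h⟩

lemma tsRho_le (hb : Bornology.IsBounded T) (hne : T.Nonempty) (ht : t ∈ T) :
    tsRho T t ≤ t := by
  unfold tsRho
  split_ifs with h
  · refine csSup_le ?_ (fun x hx => hx.2.le)
    obtain ⟨p, hp, htp⟩ := exists_lt_of_csInf_lt hne h
    exact ⟨p, hp, htp⟩
  · exact csInf_le hb.bddBelow ht

lemma le_tsRho (hb : Bornology.IsBounded T) (hs : s ∈ T) (h : s < t) :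
    s ≤ tsRho T t := by
  have hts : sInf T < t := lt_of_le_of_lt (csInf_le hb.bddBelow hs) h
  rw [tsRho, if_pos hts]
  exact le_csSup (BddAbove.mono (fun x hx => hx.1) hb.bddAbove) ⟨hs, h⟩

end myhelpers

theorem jump_operators_continuity
    (T : Set ℝ) (hclosed : IsClosed T) (hbdd : Bornology.IsBounded T)
    (hcard : 3 ≤ T.ncard) :
    (∀ t ∈ tsKd T,
      (ContinuousWithinAt (tsSigma T) T t ↔ tsSigma T (tsRho T t) = t) ∧
      (tsSigma T (tsRho T t) = t ↔ ¬ (t < tsSigma T t ∧ tsRho T t = t))) ∧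
    (∀ t ∈ tsK T,
      (ContinuousWithinAt (tsRho T) T t ↔ tsRho T (tsSigma T t) = t) ∧
      (tsRho T (tsSigma T t) = t ↔ ¬ (tsRho T t < t ∧ tsSigma T t = t))) := by
  have hne : T.Nonempty := Set.nonempty_of_ncard_ne_zero (by omega)
  have hbA := hbdd.bddAbove
  have hbB := hbdd.bddBelow
  constructor
  · -- part 1 : t ∈ 𝕋_κ
    rintro t ⟨htT, htK⟩
    have hat : sInf T ≤ t := csInf_le hbB htT
    have htb : t ≤ sSup T := le_csSup hbA htT
    have hsa : tsSigma T (sInf T) ≤ t := by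
      by_contra hlt
      exact htK ⟨hat, lt_of_not_ge hlt⟩
    have hle : t ≤ tsSigma T t := le_tsSigma hbdd hne htT
    have hrle : tsRho T t ≤ t := tsRho_le hbdd hne htT
    have h23 : tsSigma T (tsRho T t) = t ↔ ¬ (t < tsSigma T t ∧ tsRho T t = t) := by
      rcases eq_or_lt_of_le hrle with hrt | hrt
      · rw [hrt]
        constructor
        · rintro h ⟨hlt, -⟩; exact absurd h (ne_of_gt hlt)
        · intro h
          by_contra hne'
          exact h ⟨hle.lt_of_ne (fun h' => hne' h'.symm), rfl⟩
      · constructor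
        · intro _; rintro ⟨-, h2⟩; exact absurd h2 (ne_of_lt hrt)
        · intro _
          have h1 : tsRho T t < sSup T := lt_of_lt_of_le hrt htb
          rw [tsSigma, if_pos h1]
          refine le_antisymm (csInf_le (BddBelow.mono (fun x hx => hx.1) hbB) ⟨htT, hrt⟩) ?_
          refine le_csInf ⟨t, htT, hrt⟩ ?_
          rintro x ⟨hxT, hx⟩
          by_contra hxt
          push_neg at hxt
          exact absurd (le_tsRho hbdd hxT hxt) (not_le.2 hx)
    refine ⟨⟨fun hcont => h23.2 ?_, fun hii => ?_⟩, h23⟩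
    · -- discontinuity under right-scattered & left-dense
      rintro ⟨hscat, hld⟩
      have hat' : sInf T < t := by
        rcases eq_or_lt_of_le hat with he | h
        · exfalso; rw [← he] at hscat hsa
          exact absurd hsa (not_le.2 hscat)
        · exact h
      have hsup : sSup {s | s ∈ T ∧ s < t} = t := by
        rw [tsRho, if_pos hat'] at hld; exact hld
      have hSne : {s | s ∈ T ∧ s < t}.Nonempty :=
        ⟨sInf T, hclosed.csInf_mem hne hbB, hat'⟩
      have hmemcl : t ∈ closure {s | s ∈ T ∧ s < t} := by
        have := csSup_mem_closure hSne (BddAbove.mono (fun x hx => hx.1) hbA)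
        rwa [hsup] at this
      have hnb : (𝓝[{s | s ∈ T ∧ s < t}] t).NeBot :=
        mem_closure_iff_nhdsWithin_neBot.1 hmemcl
      have hsub : {s | s ∈ T ∧ s < t} ⊆ T := fun x hx => hx.1
      have h1 : ∀ᶠ s in 𝓝[{s | s ∈ T ∧ s < t}] t, t < tsSigma T s :=
        (hcont.mono hsub).tendsto.eventually (eventually_gt_nhds hscat)
      have h2 : ∀ᶠ s in 𝓝[{s | s ∈ T ∧ s < t}] t, tsSigma T s ≤ t := by
        filter_upwards [self_mem_nhdsWithin] with s hs
        exact tsSigma_le hbdd htT hs.2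
      obtain ⟨x, hx1, hx2⟩ := (h1.and h2).exists
      exact absurd hx2 (not_le.2 hx1)
    · -- continuity from (ii)
      have hiii := h23.1 hii
      rcases eq_or_lt_of_le hle with hrd | hscat
      · -- right-dense
        have hst : tsSigma T t = t := hrd.symm
        rw [ContinuousWithinAt, hst]
        refine tendsto_order.2 ⟨fun l hl => ?_, fun u hu => ?_⟩
        · filter_upwards [self_mem_nhdsWithin,
            (eventually_gt_nhds hl).filter_mono nhdsWithin_le_nhds] with s hsT hls
          exact lt_of_lt_of_le hls (le_tsSigma hbdd hne hsT)
        · rcases eq_or_lt_of_le htb with hb' | hb'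
          · filter_upwards [self_mem_nhdsWithin] with s hsT
            have h1 : tsSigma T s ≤ sSup T := le_csSup hbA (tsSigma_mem hclosed hbdd hne s)
            calc tsSigma T s ≤ sSup T := h1
              _ = t := hb'.symm
              _ < u := hu
          · have hinf : sInf {s | s ∈ T ∧ t < s} = t := by
              rw [tsSigma, if_pos hb'] at hst; exact hst
            have hSne : {s | s ∈ T ∧ t < s}.Nonempty := by
              obtain ⟨p, hp, htp⟩ := exists_lt_of_lt_csSup hne hb'
              exact ⟨p, hp, htp⟩
            obtain ⟨p, hpS, hpu⟩ := exists_lt_of_csInf_lt hSne (by rw [hinf]; exact hu)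
            filter_upwards [self_mem_nhdsWithin,
              (eventually_lt_nhds hpS.2).filter_mono nhdsWithin_le_nhds] with s hsT hsp
            exact lt_of_le_of_lt (tsSigma_le hbdd hpS.1 hsp) hpu
      · -- isolated
        have hld : tsRho T t < t := lt_of_le_of_ne hrle (fun h => hiii ⟨hscat, h⟩)
        have hsingle : {t} ∈ 𝓝[T] t := by
          have hIoo : Ioo (tsRho T t) (tsSigma T t) ∈ 𝓝 t := Ioo_mem_nhds hld hscat
          refine mem_of_superset (inter_mem self_mem_nhdsWithin (nhdsWithin_le_nhds hIoo)) ?_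
          rintro s ⟨hsT, hs1, hs2⟩
          rcases lt_trichotomy s t with h | h | h
          · exact absurd (le_tsRho hbdd hsT h) (not_le.2 hs1)
          · exact h
          · exact absurd (tsSigma_le hbdd hsT h) (not_le.2 hs2)
        exact (tendsto_pure_nhds (tsSigma T) t).mono_left (le_pure_iff.2 hsingle)
  · -- part 2 : t ∈ 𝕋^κ
    rintro t ⟨htT, htK⟩
    have hat : sInf T ≤ t := csInf_le hbB htT
    have htb : t ≤ sSup T := le_csSup hbA htT
    have hrb : t ≤ tsRho T (sSup T) := by
      by_contra hlt
      exact htK ⟨lt_of_not_ge hlt, htb⟩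
    have hle : t ≤ tsSigma T t := le_tsSigma hbdd hne htT
    have hrle : tsRho T t ≤ t := tsRho_le hbdd hne htT
    have h23 : tsRho T (tsSigma T t) = t ↔ ¬ (tsRho T t < t ∧ tsSigma T t = t) := by
      rcases eq_or_lt_of_le hle with hrd | hscat
      · rw [← hrd]
        constructor
        · rintro h ⟨hlt, -⟩; exact absurd h (ne_of_lt hlt)
        · intro h
          by_contra hne'
          exact h ⟨hrle.lt_of_ne hne', rfl⟩
      · constructor
        · intro _; rintro ⟨-, h2⟩; exact absurd h2 (ne_of_gt hscat)
        · intro _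
          have h1 : sInf T < tsSigma T t := lt_of_le_of_lt hat hscat
          rw [tsRho, if_pos h1]
          refine le_antisymm ?_ (le_csSup (BddAbove.mono (fun x hx => hx.1) hbA) ⟨htT, hscat⟩)
          refine csSup_le ⟨t, htT, hscat⟩ ?_
          rintro x ⟨hxT, hx⟩
          by_contra hxt
          push_neg at hxt
          exact absurd (tsSigma_le hbdd hxT hxt) (not_le.2 hx)
    refine ⟨⟨fun hcont => h23.2 ?_, fun hii => ?_⟩, h23⟩
    · rintro ⟨hldsc, hrdense⟩
      have hb' : t < sSup T := by
        rcases eq_or_lt_of_le htb with he | h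
        · exfalso; rw [← he] at hrb
          exact absurd hrb (not_le.2 hldsc)
        · exact h
      have hinf : sInf {s | s ∈ T ∧ t < s} = t := by
        rw [tsSigma, if_pos hb'] at hrdense; exact hrdense
      have hSne : {s | s ∈ T ∧ t < s}.Nonempty :=
        ⟨sSup T, hclosed.csSup_mem hne hbA, hb'⟩
      have hmemcl : t ∈ closure {s | s ∈ T ∧ t < s} := by
        have := csInf_mem_closure hSne (BddBelow.mono (fun x hx => hx.1) hbB)
        rwa [hinf] at this
      have hnb : (𝓝[{s | s ∈ T ∧ t < s}] t).NeBot :=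
        mem_closure_iff_nhdsWithin_neBot.1 hmemcl
      have hsub : {s | s ∈ T ∧ t < s} ⊆ T := fun x hx => hx.1
      have h1 : ∀ᶠ s in 𝓝[{s | s ∈ T ∧ t < s}] t, tsRho T s < t :=
        (hcont.mono hsub).tendsto.eventually (eventually_lt_nhds hldsc)
      have h2 : ∀ᶠ s in 𝓝[{s | s ∈ T ∧ t < s}] t, t ≤ tsRho T s := by
        filter_upwards [self_mem_nhdsWithin] with s hs
        exact le_tsRho hbdd htT hs.2
      obtain ⟨x, hx1, hx2⟩ := (h1.and h2).exists
      exact absurd hx2 (not_le.2 hx1)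
    · have hiii := h23.1 hii
      rcases eq_or_lt_of_le hrle with hld | hld
      · rw [ContinuousWithinAt, hld]
        refine tendsto_order.2 ⟨fun l hl => ?_, fun u hu => ?_⟩
        · rcases eq_or_lt_of_le hat with ha' | ha'
          · filter_upwards [self_mem_nhdsWithin] with s hsT
            have h1 : sInf T ≤ tsRho T s := csInf_le hbB (tsRho_mem hclosed hbdd hne s)
            calc l < t := hl
              _ = sInf T := ha'.symm
              _ ≤ tsRho T s := h1
          · have hsup : sSup {s | s ∈ T ∧ s < t} = t := by
              rw [tsRho, if_pos ha'] at hld; exact hld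
            have hSne : {s | s ∈ T ∧ s < t}.Nonempty := by
              obtain ⟨p, hp, htp⟩ := exists_lt_of_csInf_lt hne ha'
              exact ⟨p, hp, htp⟩
            obtain ⟨p, hpS, hpl⟩ := exists_lt_of_lt_csSup hSne (by rw [hsup]; exact hl)
            filter_upwards [self_mem_nhdsWithin,
              (eventually_gt_nhds hpS.2).filter_mono nhdsWithin_le_nhds] with s hsT hsp
            exact lt_of_lt_of_le hpl (le_tsRho hbdd hpS.1 hsp)
        · filter_upwards [self_mem_nhdsWithin,
            (eventually_lt_nhds hu).filter_mono nhdsWithin_le_nhds] with s hsT hsu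
          exact lt_of_le_of_lt (tsRho_le hbdd hne hsT) hsu
      · have hscat : t < tsSigma T t := hle.lt_of_ne (fun h => hiii ⟨hld, h.symm⟩)
        have hsingle : {t} ∈ 𝓝[T] t := by
          have hIoo : Ioo (tsRho T t) (tsSigma T t) ∈ 𝓝 t := Ioo_mem_nhds hld hscat
          refine mem_of_superset (inter_mem self_mem_nhdsWithin (nhdsWithin_le_nhds hIoo)) ?_
          rintro s ⟨hsT, hs1, hs2⟩
          rcases lt_trichotomy s t with h | h | h
          · exact absurd (le_tsRho hbdd hsT h) (not_le.2 hs1)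
          · exact h
          · exact absurd (tsSigma_le hbdd hsT h) (not_le.2 hs2)
        exact (tendsto_pure_nhds (tsRho T) t).mono_left (le_pure_iff.2 hsingle)
end
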